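/- Let s_1 < s_2 < s_3 be real numbers, let 0 < n̄ < N be integers, and let BC_1,…,BC_{N+1} be independent real random variables with BC_n ~ N(S_n, 1), where S_n = s_1 for n = 1,…,n̄, S_n = s_2 for n = n̄+1,…,N, and S_{N+1} = s_3. If |s_3 − s_1| < 1/40 and |s_3 − s_1| > ((N − n̄)/(N − n̄ + 1))·|s_2 − s_1|, then the validity gap computed after discarding the first n̄ calibration scores, gap' = (1/(N − n̄ + 1))·Σ_{n=n̄+1}^N d_TV(BC_n, BC_{N+1}), is smaller than the validity gap computed from all N calibration scores, gap = (1/(N+1))·Σ_{n=1}^N d_TV(BC_n, BC_{N+1}). -/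

import Mathlib

/-! With equal variances, the total variation distance between `N(μ, v)` and `N(ν, v)`, `μ ≤ ν`,
is attained on the half-line below the midpoint `(μ + ν) / 2`, where the first density dominates.
It therefore equals `Φ(d/2) - Φ(-d/2)` with `d = ν - μ` and `Φ` the cdf of `N(0, v)`, which is
strictly increasing in `d`. Hence the discarded scores, centred at `s₁`, are strictly farther
from the test score than the kept ones, centred at `s₂`: `b < a` for the two distances. Dropping
them replaces the average `(n̄ a + (N - n̄) b) / (N + 1)` by `(N - n̄) b / (N - n̄ + 1)`, which is
smaller. -/

open MeasureTheory ProbabilityTheory Finset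

/-- Total variation distance between two measures on `ℝ`:
`d_TV(μ,ν) = sup over measurable sets B of |μ(B) − ν(B)|`. -/
noncomputable def dTV (μ ν : Measure ℝ) : ℝ :=
  ⨆ s : {s : Set ℝ // MeasurableSet s}, |(μ s.1).toReal - (ν s.1).toReal|

open Set NNReal

section SetIntegral

variable {α : Type*} [MeasurableSpace α] {μ : Measure α} {f : α → ℝ} {A B : Set α}

theorem setIntegral_le_setIntegral_of_nonneg_on_of_nonpos_off (hf : Integrable f μ)
    (hA : MeasurableSet A) (hB : MeasurableSet B) (hpos : ∀ x ∈ A, 0 ≤ f x)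
    (hneg : ∀ x ∉ A, f x ≤ 0) :
    ∫ x in B, f x ∂μ ≤ ∫ x in A, f x ∂μ := by
  have hinter : ∫ x in B ∩ A, f x ∂μ ≤ ∫ x in A, f x ∂μ :=
    setIntegral_mono_set hf.integrableOn ((ae_restrict_iff' hA).2 (ae_of_all _ hpos))
      (ae_of_all _ inter_subset_right)
  have hdiff : ∫ x in B \ A, f x ∂μ ≤ 0 := setIntegral_nonpos (hB.diff hA) fun x hx => hneg x hx.2
  linarith [integral_inter_add_sdiff hA hf.integrableOn (s := B)]

theorem abs_setIntegral_le_setIntegral_of_nonneg_on_of_nonpos_off (hf : Integrable f μ)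
    (hf0 : ∫ x, f x ∂μ = 0) (hA : MeasurableSet A) (hB : MeasurableSet B)
    (hpos : ∀ x ∈ A, 0 ≤ f x) (hneg : ∀ x ∉ A, f x ≤ 0) :
    |∫ x in B, f x ∂μ| ≤ ∫ x in A, f x ∂μ := by
  have hcompl := setIntegral_le_setIntegral_of_nonneg_on_of_nonpos_off hf hA hB.compl hpos hneg
  refine abs_le.2 ⟨?_, setIntegral_le_setIntegral_of_nonneg_on_of_nonpos_off hf hA hB hpos hneg⟩
  linarith [integral_add_compl hB hf]

end SetIntegral

theorem dTV_nonneg (μ ν : Measure ℝ) : 0 ≤ dTV μ ν :=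
  Real.iSup_nonneg fun _ => abs_nonneg _

theorem dTV_eq_of_forall_le {μ ν : Measure ℝ} {A : Set ℝ} (hA : MeasurableSet A)
    (hle : ∀ B, MeasurableSet B → |μ.real B - ν.real B| ≤ |μ.real A - ν.real A|) :
    dTV μ ν = |μ.real A - ν.real A| :=
  le_antisymm (ciSup_le fun B => hle B.1 B.2)
    (le_ciSup (f := fun B : {s : Set ℝ // MeasurableSet s} => |μ.real B.1 - ν.real B.1|)
      ⟨_, forall_mem_range.2 fun B => hle B.1 B.2⟩ ⟨A, hA⟩)

theorem strictMono_cdf_of_absolutelyContinuous {μ : Measure ℝ} [IsProbabilityMeasure μ]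
    (h : volume ≪ μ) : StrictMono (cdf μ) := by
  intro a b hab
  have hpos : μ (Ioc a b) ≠ 0 := fun h0 => hab.not_ge (by simpa using h h0)
  rw [← measure_cdf μ, StieltjesFunction.measure_Ioc, ENNReal.ofReal_ne_zero_iff] at hpos
  linarith

theorem measureReal_gaussianReal {μ : ℝ} {v : ℝ≥0} (hv : v ≠ 0) (s : Set ℝ) :
    (gaussianReal μ v).real s = ∫ x in s, gaussianPDFReal μ v x := by
  rw [measureReal_def, gaussianReal_apply_eq_integral μ hv,
    ENNReal.toReal_ofReal (setIntegral_nonneg_of_ae (ae_of_all _ (gaussianPDFReal_nonneg μ v)))]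

theorem measureReal_gaussianReal_Iic (μ : ℝ) (v : ℝ≥0) (t : ℝ) :
    (gaussianReal μ v).real (Iic t) = cdf (gaussianReal 0 v) (t - μ) := by
  rw [cdf_eq_real, ← zero_add μ, ← gaussianReal_map_add_const, map_measureReal_apply
    (measurable_add_const μ) measurableSet_Iic, preimage_add_const_Iic, zero_add]

theorem gaussianPDFReal_le_gaussianPDFReal {μ ν : ℝ} {v : ℝ≥0} {x : ℝ}
    (h : (x - μ) ^ 2 ≤ (x - ν) ^ 2) : gaussianPDFReal ν v x ≤ gaussianPDFReal μ v x := by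
  simp only [gaussianPDFReal]
  gcongr

theorem dTV_gaussianReal {μ ν : ℝ} {v : ℝ≥0} (hv : v ≠ 0) (h : μ ≤ ν) :
    dTV (gaussianReal μ v) (gaussianReal ν v) =
      cdf (gaussianReal 0 v) ((ν - μ) / 2) - cdf (gaussianReal 0 v) (-((ν - μ) / 2)) := by
  set m := (μ + ν) / 2 with hm
  have hdiff : ∀ s, (gaussianReal μ v).real s - (gaussianReal ν v).real s =
      ∫ x in s, (gaussianPDFReal μ v x - gaussianPDFReal ν v x) := fun s => by
    rw [measureReal_gaussianReal hv, measureReal_gaussianReal hv,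
      integral_sub (integrable_gaussianPDFReal μ v).integrableOn
        (integrable_gaussianPDFReal ν v).integrableOn]
  have hmass : ∫ x, (gaussianPDFReal μ v x - gaussianPDFReal ν v x) = 0 := by
    rw [integral_sub (integrable_gaussianPDFReal μ v) (integrable_gaussianPDFReal ν v),
      integral_gaussianPDFReal_eq_one μ hv, integral_gaussianPDFReal_eq_one ν hv, sub_self]
  have hval : (gaussianReal μ v).real (Iic m) - (gaussianReal ν v).real (Iic m) =
      cdf (gaussianReal 0 v) ((ν - μ) / 2) - cdf (gaussianReal 0 v) (-((ν - μ) / 2)) := by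
    rw [measureReal_gaussianReal_Iic, measureReal_gaussianReal_Iic]
    congr 2 <;> ring
  have hval_nonneg : 0 ≤ (gaussianReal μ v).real (Iic m) - (gaussianReal ν v).real (Iic m) := by
    rw [hval, sub_nonneg]
    exact monotone_cdf _ (by linarith)
  rw [dTV_eq_of_forall_le measurableSet_Iic (A := Iic m), abs_of_nonneg hval_nonneg, hval]
  intro B hB
  rw [abs_of_nonneg hval_nonneg, hdiff, hdiff]
  refine abs_setIntegral_le_setIntegral_of_nonneg_on_of_nonpos_off
    ((integrable_gaussianPDFReal μ v).sub (integrable_gaussianPDFReal ν v)) hmass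
    measurableSet_Iic hB (fun x hx => ?_) (fun x hx => ?_)
  · have hxm : 2 * x ≤ μ + ν := by linarith [show x ≤ m from hx, hm]
    exact sub_nonneg.2 (gaussianPDFReal_le_gaussianPDFReal
      (by nlinarith [mul_nonneg (sub_nonneg.2 h) (sub_nonneg.2 hxm)]))
  · have hxm : μ + ν ≤ 2 * x := by linarith [show m < x from not_le.1 hx, hm]
    exact sub_nonpos.2 (gaussianPDFReal_le_gaussianPDFReal
      (by nlinarith [mul_nonneg (sub_nonneg.2 h) (sub_nonneg.2 hxm)]))

theorem dTV_gaussianReal_lt_of_lt {μ₁ μ₂ ν : ℝ} {v : ℝ≥0} (hv : v ≠ 0) (h₁₂ : μ₁ < μ₂)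
    (h₂ : μ₂ ≤ ν) :
    dTV (gaussianReal μ₂ v) (gaussianReal ν v) < dTV (gaussianReal μ₁ v) (gaussianReal ν v) := by
  have hΦ := strictMono_cdf_of_absolutelyContinuous (gaussianReal_absolutelyContinuous' 0 hv)
  rw [dTV_gaussianReal hv h₂, dTV_gaussianReal hv (h₁₂.le.trans h₂)]
  have hupper := hΦ (show (ν - μ₂) / 2 < (ν - μ₁) / 2 by linarith)
  have hlower := hΦ (show -((ν - μ₁) / 2) < -((ν - μ₂) / 2) by linarith)
  linarith

theorem sub_mul_div_lt_add_mul_div_of_lt {k N a b : ℝ} (hk : 0 < k) (hkN : k ≤ N) (hb : 0 ≤ b)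
    (hba : b < a) : (N - k) * b / (N - k + 1) < (k * a + (N - k) * b) / (N + 1) := by
  rw [div_lt_div_iff₀ (by linarith) (by linarith)]
  nlinarith [mul_le_mul_of_nonneg_left hba.le (mul_nonneg hk.le (sub_nonneg.2 hkN)),
    mul_pos hk (hb.trans_lt hba)]

theorem sample_selection_reduces_gap_general
    {Ω : Type*} [MeasurableSpace Ω] (P : Measure Ω)
    (N nbar : ℕ) (hnbar0 : 0 < nbar) (hnbarN : nbar < N)
    (s₁ s₂ s₃ : ℝ) (h12 : s₁ < s₂) (h23 : s₂ < s₃)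
    (S : ℕ → ℝ)
    (hS1 : ∀ n < nbar, S n = s₁)
    (hS2 : ∀ n, nbar ≤ n → n < N → S n = s₂)
    (hS3 : S N = s₃)
    (BC : ℕ → Ω → ℝ)
    (hgauss : ∀ n ≤ N, P.map (BC n) = gaussianReal (S n) 1) :
    (1 / ((N : ℝ) - nbar + 1)) *
        ∑ n ∈ Finset.Ico nbar N, dTV (P.map (BC n)) (P.map (BC N)) <
      (1 / ((N : ℝ) + 1)) *
        ∑ n ∈ Finset.range N, dTV (P.map (BC n)) (P.map (BC N)) := by
  have htest : P.map (BC N) = gaussianReal s₃ 1 := by rw [hgauss N le_rfl, hS3]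
  have hdiscarded : ∑ n ∈ range nbar, dTV (P.map (BC n)) (P.map (BC N)) =
      nbar * dTV (gaussianReal s₁ 1) (gaussianReal s₃ 1) := by
    rw [sum_congr rfl fun n hn => by
        rw [htest, hgauss n ((mem_range.1 hn).trans hnbarN).le, hS1 n (mem_range.1 hn)],
      sum_const, card_range, nsmul_eq_mul]
  have hkept : ∑ n ∈ Ico nbar N, dTV (P.map (BC n)) (P.map (BC N)) =
      ((N : ℝ) - nbar) * dTV (gaussianReal s₂ 1) (gaussianReal s₃ 1) := by
    rw [sum_congr rfl fun n hn => by
        rw [htest, hgauss n (mem_Ico.1 hn).2.le, hS2 n (mem_Ico.1 hn).1 (mem_Ico.1 hn).2],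
      sum_const, Nat.card_Ico, nsmul_eq_mul, Nat.cast_sub hnbarN.le]
  rw [← sum_range_add_sum_Ico _ hnbarN.le, hdiscarded, hkept, one_div_mul_eq_div,
    one_div_mul_eq_div]
  exact sub_mul_div_lt_add_mul_div_of_lt (Nat.cast_pos.2 hnbar0) (Nat.cast_le.2 hnbarN.le)
    (dTV_nonneg _ _) (dTV_gaussianReal_lt_of_lt one_ne_zero h12 h23.le)

/-- Calibration-sample selection (Lemma on sample selection with an ordinal
feature): with independent scores `BC_n ~ N(S_n, 1)`, `S_n = s₁` for the first
`n̄` calibration scores, `S_n = s₂` for the remaining `N − n̄`, and `s₃` for the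
test score, if `|s₃ − s₁| < 1/40` and
`|s₃ − s₁| > ((N − n̄)/(N − n̄ + 1))·|s₂ − s₁|`, then discarding the first `n̄`
calibration scores reduces the validity gap:
`(1/(N − n̄ + 1))·Σ_{n=n̄+1}^N d_TV(BC_n, BC_{N+1}) <
 (1/(N+1))·Σ_{n=1}^N d_TV(BC_n, BC_{N+1})`.
Indices `0,…,N-1` are the calibration scores and `N` is the test score. -/
theorem sample_selection_reduces_gap
    {Ω : Type*} [MeasurableSpace Ω] (P : Measure Ω) [IsProbabilityMeasure P]
    (N nbar : ℕ) (hnbar0 : 0 < nbar) (hnbarN : nbar < N)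
    (s₁ s₂ s₃ : ℝ) (h12 : s₁ < s₂) (h23 : s₂ < s₃)
    (S : ℕ → ℝ)
    (hS1 : ∀ n < nbar, S n = s₁)
    (hS2 : ∀ n, nbar ≤ n → n < N → S n = s₂)
    (hS3 : S N = s₃)
    (BC : ℕ → Ω → ℝ) (hmeas : ∀ n, Measurable (BC n))
    (hindep : iIndepFun (fun n : Fin (N + 1) => BC n) P)
    (hgauss : ∀ n ≤ N, P.map (BC n) = gaussianReal (S n) 1)
    (hsmall : |s₃ - s₁| < 1 / 40)
    (hlarge : |s₃ - s₁| >
      (((N : ℝ) - nbar) / ((N : ℝ) - nbar + 1)) * |s₂ - s₁|) :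
    (1 / ((N : ℝ) - nbar + 1)) *
        ∑ n ∈ Finset.Ico nbar N, dTV (P.map (BC n)) (P.map (BC N)) <
      (1 / ((N : ℝ) + 1)) *
        ∑ n ∈ Finset.range N, dTV (P.map (BC n)) (P.map (BC N)) :=
  sample_selection_reduces_gap_general P N nbar hnbar0 hnbarN s₁ s₂ s₃ h12 h23 S hS1 hS2 hS3 BC
    hgauss
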